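/- Let N ≥ 1 be an integer. There exist a monotone set-valued operator A : ℝ² → Set ℝ² with 0 ∈ A(0) and points w^0, w^1, …, w^{N+1} ∈ ℝ² such that ‖w^0‖ = 1, w^k − w^{k+1} ∈ A(w^{k+1}) for all k = 0, …, N, and ‖w^N − w^{N+1}‖² = N^N/(N+1)^{N+1}. Consequently, the worst-case bound N^N/(N+1)^{N+1} = 1/((1+1/N)^N (N+1)) for the squared fixed-point residual of the proximal point algorithm with unit parameter and unit initial distance to a zero is attained, hence cannot be improved. -/

import Mathlib

/-!
Take `A = c · J`, where `J` is the rotation by a right angle and `c = 1/√N`. Since `J` is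
skew, `A` is monotone, and the proximal iterates starting from a unit vector are
`w^k = (1 + c i)^{-k}` in complex notation. The residual `w^N - w^{N+1} = c i w^{N+1}` then
has squared norm `c² / (1 + c²)^{N+1} = N^N / (N+1)^{N+1}`.
-/

open scoped RealInnerProductSpace

open Complex

def IsMonotoneOperator {E : Type*} [NormedAddCommGroup E] [InnerProductSpace ℝ E]
    (A : E → Set E) : Prop :=
  ∀ x y u v, u ∈ A x → v ∈ A y → 0 ≤ ⟪u - v, x - y⟫

theorem isMonotoneOperator_singleton_of_inner_self_nonneg {E : Type*} [NormedAddCommGroup E]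
    [InnerProductSpace ℝ E] (T : E →ₗ[ℝ] E) (hT : ∀ x, 0 ≤ ⟪T x, x⟫) :
    IsMonotoneOperator fun x => {T x} := by
  rintro x y u v rfl rfl
  simpa only [← map_sub] using hT (x - y)

theorem Complex.inner_mul_I_mul_self (c : ℝ) (z : ℂ) : ⟪c * I * z, z⟫ = 0 := by
  simp only [Complex.inner, map_mul, conj_ofReal, conj_I, mul_re, mul_im, ofReal_re, ofReal_im,
    I_re, I_im, neg_re, neg_im, conj_re, conj_im]
  ring

theorem inv_pow_sub_inv_pow_succ {K : Type*} [Field K] {ζ : K} (hζ : ζ ≠ 0) (k : ℕ) :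
    ζ⁻¹ ^ k - ζ⁻¹ ^ (k + 1) = (ζ - 1) * ζ⁻¹ ^ (k + 1) := by
  rw [pow_succ, mul_comm _ ζ⁻¹, ← mul_assoc, mul_sub_right_distrib ζ, mul_inv_cancel₀ hζ]
  ring

theorem Complex.norm_one_add_mul_I_sq (c : ℝ) : ‖1 + c * I‖ ^ 2 = 1 + c ^ 2 := by
  rw [Complex.sq_norm, ← ofReal_one, normSq_add_mul_I, one_pow]

theorem Complex.norm_mul_I_mul_inv_pow_sq (c : ℝ) (n : ℕ) :
    ‖c * I * (1 + c * I)⁻¹ ^ n‖ ^ 2 = c ^ 2 / (1 + c ^ 2) ^ n := by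
  rw [norm_mul, norm_mul, norm_pow, norm_inv, norm_I, mul_one, mul_pow, ← pow_mul, mul_comm n,
    pow_mul, inv_pow, norm_one_add_mul_I_sq, norm_real, Real.norm_eq_abs, sq_abs, inv_pow,
    div_eq_mul_inv]

theorem inv_div_one_add_inv_pow_succ {x : ℝ} (hx : x ≠ 0) (n : ℕ) :
    x⁻¹ / (1 + x⁻¹) ^ (n + 1) = x ^ n / (x + 1) ^ (n + 1) := by
  rw [show 1 + x⁻¹ = (x + 1) / x by field_simp, div_pow, pow_succ x]
  field_simp

/-- Tightness of the optimal bound: there is a monotone operator `A` on `ℝ²` with `0 ∈ A 0`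
and proximal point iterates `w⁰, …, w^{N+1}` (unit parameter) with `‖w⁰‖ = 1` whose
squared fixed-point residual equals `N^N/(N+1)^{N+1}`. -/
theorem ppa_optimal_rate_attained (N : ℕ) (hN : 1 ≤ N) :
    ∃ (A : EuclideanSpace ℝ (Fin 2) → Set (EuclideanSpace ℝ (Fin 2)))
      (w : ℕ → EuclideanSpace ℝ (Fin 2)),
      (∀ x y u v, u ∈ A x → v ∈ A y → 0 ≤ ⟪u - v, x - y⟫) ∧
      (0 : EuclideanSpace ℝ (Fin 2)) ∈ A 0 ∧
      ‖w 0‖ = 1 ∧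
      (∀ k ≤ N, w k - w (k + 1) ∈ A (w (k + 1))) ∧
      ‖w N - w (N + 1)‖ ^ 2 = (N : ℝ) ^ N / ((N : ℝ) + 1) ^ (N + 1) := by
  let e : ℂ ≃ₗᵢ[ℝ] EuclideanSpace ℝ (Fin 2) :=
    Complex.isometryOfOrthonormal (EuclideanSpace.basisFun (Fin 2) ℝ)
  let c : ℝ := (Real.sqrt N)⁻¹
  have hc : c ^ 2 = (N : ℝ)⁻¹ := by
    rw [inv_pow, Real.sq_sqrt (Nat.cast_nonneg N)]
  have hζ : 1 + c * I ≠ 0 := fun h => by simpa using congrArg re h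
  let T := e.toLinearEquiv.conj (LinearMap.mulLeft ℝ (c * I))
  have hT : ∀ z, T (e z) = e (c * I * z) := fun z => by
    simp [T, LinearEquiv.conj_apply_apply, mul_assoc]
  have hstep : ∀ k, e ((1 + c * I)⁻¹ ^ k) - e ((1 + c * I)⁻¹ ^ (k + 1))
      = e (c * I * (1 + c * I)⁻¹ ^ (k + 1)) := fun k => by
    rw [← map_sub, inv_pow_sub_inv_pow_succ hζ, add_sub_cancel_left]
  refine ⟨fun x => {T x}, fun k => e ((1 + c * I)⁻¹ ^ k),
    isMonotoneOperator_singleton_of_inner_self_nonneg T fun x => ?_, by simp, by simp,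
    fun k _ => by rw [Set.mem_singleton_iff, hT, hstep], ?_⟩
  · rw [← e.apply_symm_apply x, hT, e.inner_map_map, inner_mul_I_mul_self]
  · rw [hstep, e.norm_map, norm_mul_I_mul_inv_pow_sq, hc,
      inv_div_one_add_inv_pow_succ (Nat.cast_ne_zero.2 (Nat.one_le_iff_ne_zero.1 hN))]
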